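/- (Lemma 3.3) For every fixed n with 2 ≤ n ≤ N, the DOC kernels are strictly monotonically decreasing: θ_0^{(n)} > θ_1^{(n)} > ⋯ > θ_{n−1}^{(n)} > 0. -/

import Mathlib

open Finset intervalIntegral Matrix

noncomputable def omegaK (μ s : ℝ) : ℝ := s ^ (μ - 1) / Real.Gamma μ

noncomputable def qK (α : ℝ) (t : ℕ → ℝ) (n k : ℕ) : ℝ :=
  ∫ s in (t (k - 1))..(t k), omegaK α (t n - s)

noncomputable def aK (α : ℝ) (t : ℕ → ℝ) (n k : ℕ) : ℝ :=
  if k = n then qK α t n n else qK α t n k - qK α t (n - 1) k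

noncomputable def thetaAux (A : ℕ → ℕ → ℝ) (n : ℕ) : ℕ → ℕ → ℝ
  | 0, m => if m = 0 then 1 / A n n else 0
  | M + 1, m =>
      if m ≤ M then thetaAux A n M m
      else -(1 / A (n - (M + 1)) (n - (M + 1))) *
        ∑ ℓ ∈ Finset.range (M + 1), thetaAux A n M ℓ * A (n - ℓ) (n - (M + 1))

noncomputable def thetaK (α : ℝ) (t : ℕ → ℝ) (n k : ℕ) : ℝ :=
  thetaAux (aK α t) n (n - k) (n - k)

noncomputable def Hfun (a b : ℝ) : ℝ := a ^ 3 / 3 + a * b ^ 2 / 2 + b ^ 3 / 6 - (a + b) / 2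

noncomputable def Ffun (u : ℝ) : ℝ := (1 - u ^ 2) ^ 2 / 4

noncomputable def zetaK (α : ℝ) (t : ℕ → ℝ) (n j : ℕ) : ℝ :=
  if j = n then thetaK α t n n else thetaK α t n j - thetaK α t n (j + 1)

/-!
Write `q j k` for `q_{j-k}^{(j)}`. Since `ω_α` is positive, strictly decreasing and strictly
log-convex on `(0, ∞)`, the kernel `q` is positive, strictly decreasing in `j`, and its
2×2 minors `q n k * q j (k+1) - q n (k+1) * q j k` (for `j < n`) are positive. Positivity of the
DOC kernels then follows from the recursion by strong induction. Summation by parts rewrites the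
recursion as `∑_{ℓ < n-k} (θ_ℓ - θ_{ℓ+1}) q (n-ℓ-1) k = θ_0 q n k`; eliminating `θ_0` between the
identities for `k` and `k + 1` expresses `θ_ℓ - θ_{ℓ+1}` as a combination of the earlier
differences with these minors as (positive) weights, and strong induction finishes.
-/

section Kernel

variable {α : ℝ}

lemma omegaK_pos (hα0 : 0 < α) {x : ℝ} (hx : 0 < x) : 0 < omegaK α x :=
  div_pos (Real.rpow_pos_of_pos hx _) (Real.Gamma_pos_of_pos hα0)

lemma omegaK_strictAntiOn (hα0 : 0 < α) (hα1 : α < 1) : StrictAntiOn (omegaK α) (Set.Ioi 0) :=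
  fun _ hx _ _ hxy => div_lt_div_of_pos_right
    (Real.rpow_lt_rpow_of_neg hx hxy (by linarith)) (Real.Gamma_pos_of_pos hα0)

/-- `s ↦ ω_α(T' - s) / ω_α(T - s)` is strictly decreasing on `s < T < T'`. -/
lemma omegaK_mul_lt_mul (hα0 : 0 < α) (hα1 : α < 1) {s₁ s₂ T T' : ℝ}
    (hs : s₁ < s₂) (hs₂ : s₂ < T) (hT : T < T') :
    omegaK α (T' - s₂) * omegaK α (T - s₁) < omegaK α (T - s₂) * omegaK α (T' - s₁) := by
  unfold omegaK
  rw [div_mul_div_comm, div_mul_div_comm,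
    ← Real.mul_rpow (by linarith) (by linarith), ← Real.mul_rpow (by linarith) (by linarith)]
  refine div_lt_div_of_pos_right (Real.rpow_lt_rpow_of_neg (by nlinarith) ?_ (by linarith))
    (by have := Real.Gamma_pos_of_pos hα0; positivity)
  nlinarith

lemma intervalIntegrable_omegaK_sub (hα0 : 0 < α) (T a b : ℝ) :
    IntervalIntegrable (fun s => omegaK α (T - s)) MeasureTheory.volume a b := by
  simpa [omegaK, sub_sub_cancel] using
    ((intervalIntegrable_rpow' (r := α - 1) (by linarith) (a := T - a) (b := T - b)).comp_sub_left
      T).div_const (Real.Gamma α)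

lemma mul_integral_omegaK_lt (hα0 : 0 < α) {a b c c' T T' : ℝ} (hab : a < b)
    (h : ∀ s ∈ Set.Ioo a b, c * omegaK α (T - s) < c' * omegaK α (T' - s)) :
    c * ∫ s in a..b, omegaK α (T - s) < c' * ∫ s in a..b, omegaK α (T' - s) := by
  rw [← integral_const_mul, ← integral_const_mul, ← sub_pos,
    ← integral_sub ((intervalIntegrable_omegaK_sub hα0 _ _ _).const_mul _)
      ((intervalIntegrable_omegaK_sub hα0 _ _ _).const_mul _)]
  exact intervalIntegral_pos_of_pos_on
    (((intervalIntegrable_omegaK_sub hα0 _ _ _).const_mul _).sub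
      ((intervalIntegrable_omegaK_sub hα0 _ _ _).const_mul _))
    (fun s hs => sub_pos.mpr (h s hs)) hab

variable {t : ℕ → ℝ} {j j' k n : ℕ}

lemma qK_pos (hα0 : 0 < α) (hk : t (k - 1) < t k) (hkj : t k ≤ t j) : 0 < qK α t j k := by
  unfold qK
  simpa only [zero_mul, one_mul] using
    mul_integral_omegaK_lt (c := 0) (c' := 1) (T := t j) (T' := t j) hα0 hk
      fun s hs => by simpa only [zero_mul, one_mul] using omegaK_pos hα0 (by linarith [hs.2])

lemma qK_lt_qK (hα0 : 0 < α) (hα1 : α < 1) (hk : t (k - 1) < t k) (hkj : t k ≤ t j)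
    (hjj' : t j < t j') : qK α t j' k < qK α t j k := by
  unfold qK
  simpa only [one_mul] using
    mul_integral_omegaK_lt (c := 1) (c' := 1) (T := t j') (T' := t j) hα0 hk fun s hs => by
      simpa only [one_mul] using omegaK_strictAntiOn hα0 hα1 (Set.mem_Ioi.mpr (by linarith [hs.2]))
        (Set.mem_Ioi.mpr (by linarith [hs.2])) (by linarith)

/-- Total positivity of order two of the kernel `(j, k) ↦ q_{j-k}^{(j)}`. -/
lemma qK_mul_lt_mul (hα0 : 0 < α) (hα1 : α < 1) (hk : t (k - 1) < t k)
    (hk' : t k < t (k + 1)) (hkj : t (k + 1) ≤ t j) (hjn : t j < t n) :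
    qK α t j k * qK α t n (k + 1) < qK α t n k * qK α t j (k + 1) := by
  have htk : t k < t j := hk'.trans_le hkj
  have hleft : omegaK α (t n - t k) * qK α t j k < omegaK α (t j - t k) * qK α t n k :=
    mul_integral_omegaK_lt hα0 hk fun s hs => omegaK_mul_lt_mul hα0 hα1 hs.2 htk hjn
  have hright :
      omegaK α (t j - t k) * qK α t n (k + 1) < omegaK α (t n - t k) * qK α t j (k + 1) :=
    mul_integral_omegaK_lt hα0 (by simpa using hk') fun s hs => by
      rw [mul_comm, mul_comm (omegaK α (t n - t k))]
      exact omegaK_mul_lt_mul hα0 hα1 (by simpa using hs.1) (hs.2.trans_le hkj) hjn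
  have ha := omegaK_pos hα0 (sub_pos.mpr (htk.trans hjn))
  have hb := omegaK_pos hα0 (sub_pos.mpr htk)
  have hprod := mul_lt_mul'' hleft hright (by positivity [qK_pos hα0 hk htk.le])
    (by positivity [qK_pos hα0 (by simpa using hk') (hkj.trans hjn.le)])
  exact lt_of_mul_lt_mul_left (a := omegaK α (t n - t k) * omegaK α (t j - t k))
    (by linarith) (by positivity)

end Kernel

section thetaAux

variable (A : ℕ → ℕ → ℝ) (n : ℕ)

lemma thetaAux_of_le {M m : ℕ} (hm : m ≤ M) : thetaAux A n M m = thetaAux A n m m := by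
  induction M with
  | zero => obtain rfl := Nat.le_zero.mp hm; rfl
  | succ M ih =>
    rcases hm.eq_or_lt with rfl | hlt
    · rfl
    · rw [thetaAux, if_pos (Nat.lt_succ_iff.mp hlt), ih (Nat.lt_succ_iff.mp hlt)]

lemma thetaAux_succ_self (M : ℕ) :
    thetaAux A n (M + 1) (M + 1) = -(1 / A (n - (M + 1)) (n - (M + 1))) *
      ∑ ℓ ∈ range (M + 1), thetaAux A n ℓ ℓ * A (n - ℓ) (n - (M + 1)) := by
  rw [thetaAux, if_neg (by omega)]
  congr 1
  exact sum_congr rfl fun ℓ hℓ => by rw [thetaAux_of_le A n (Nat.lt_succ_iff.mp (mem_range.mp hℓ))]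

end thetaAux

lemma thetaAux_aK_zero (α : ℝ) (t : ℕ → ℝ) (n : ℕ) :
    thetaAux (aK α t) n 0 0 = 1 / qK α t n n := by
  simp [thetaAux, aK]

lemma thetaAux_aK_mul_qK {α : ℝ} {t : ℕ → ℝ} {n m : ℕ} (hm : 1 ≤ m) (hmn : m ≤ n)
    (hq : qK α t (n - m) (n - m) ≠ 0) :
    thetaAux (aK α t) n m m * qK α t (n - m) (n - m) =
      ∑ ℓ ∈ range m, thetaAux (aK α t) n ℓ ℓ *
        (qK α t (n - ℓ - 1) (n - m) - qK α t (n - ℓ) (n - m)) := by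
  obtain ⟨M, rfl⟩ : ∃ M, m = M + 1 := ⟨m - 1, by omega⟩
  rw [thetaAux_succ_self, aK, if_pos rfl, neg_mul, neg_mul, one_div_mul_eq_div,
    div_mul_cancel₀ _ hq, ← sum_neg_distrib]
  refine sum_congr rfl fun ℓ hℓ => ?_
  rw [aK, if_neg (by have := mem_range.mp hℓ; omega), Nat.sub_sub]
  ring

/-- `θ m` stands for `θ_m^{(n)}` and `q j k` for `q_{j-k}^{(j)}`, so that
`a_{j-k}^{(j)} = q j k - q (j - 1) k`; the DOC recursion is multiplied out by `a_0^{(n-m)}`. -/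
def IsDOCKernel (q : ℕ → ℕ → ℝ) (n : ℕ) (θ : ℕ → ℝ) : Prop :=
  ∀ m, 1 ≤ m → m < n → θ m * q (n - m) (n - m) =
    ∑ ℓ ∈ range m, θ ℓ * (q (n - ℓ - 1) (n - m) - q (n - ℓ) (n - m))

namespace IsDOCKernel

variable {q : ℕ → ℕ → ℝ} {n : ℕ} {θ : ℕ → ℝ}

lemma pos (h : IsDOCKernel q n θ) (hq : ∀ j k, 1 ≤ k → k ≤ j → j ≤ n → 0 < q j k)
    (hanti : ∀ j k, 1 ≤ k → k < j → j ≤ n → q j k < q (j - 1) k) (h0 : 0 < θ 0) :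
    ∀ m < n, 0 < θ m := by
  intro m
  induction m using Nat.strong_induction_on with
  | _ m ih =>
    intro hmn
    rcases Nat.eq_zero_or_pos m with rfl | hm
    · exact h0
    have hqm := hq (n - m) (n - m) (by omega) le_rfl (by omega)
    rw [(eq_div_iff hqm.ne').mpr (h m hm hmn)]
    refine div_pos (sum_pos (fun ℓ hℓ => ?_) (nonempty_range_iff.mpr hm.ne')) hqm
    have hℓ := mem_range.mp hℓ
    exact mul_pos (ih ℓ hℓ (by omega))
      (sub_pos.mpr (hanti (n - ℓ) (n - m) (by omega) (by omega) (by omega)))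

lemma sum_sub_mul (h : IsDOCKernel q n θ) {k : ℕ} (hk : 1 ≤ k) (hkn : k < n) :
    ∑ ℓ ∈ range (n - k), (θ ℓ - θ (ℓ + 1)) * q (n - ℓ - 1) k = θ 0 * q n k := by
  have hrec := h (n - k) (by omega) (by omega)
  rw [Nat.sub_sub_self hkn.le] at hrec
  set f : ℕ → ℝ := fun ℓ => θ ℓ * q (n - ℓ) k
  calc ∑ ℓ ∈ range (n - k), (θ ℓ - θ (ℓ + 1)) * q (n - ℓ - 1) k
      = ∑ ℓ ∈ range (n - k), (θ ℓ * (q (n - ℓ - 1) k - q (n - ℓ) k) + (f ℓ - f (ℓ + 1))) :=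
        sum_congr rfl fun ℓ _ => by simp only [f, Nat.sub_sub]; ring
    _ = θ (n - k) * q k k + (f 0 - f (n - k)) := by rw [sum_add_distrib, ← hrec, sum_range_sub']
    _ = θ 0 * q n k := by simp only [f, Nat.sub_zero, Nat.sub_sub_self hkn.le]; ring

lemma succ_lt (h : IsDOCKernel q n θ) (hq : ∀ j k, 1 ≤ k → k ≤ j → j ≤ n → 0 < q j k)
    (hTP : ∀ j k, 1 ≤ k → k < j → j < n → q j k * q n (k + 1) < q n k * q j (k + 1))
    (h0 : 0 < θ 0) : ∀ ℓ, ℓ + 1 < n → θ (ℓ + 1) < θ ℓ := by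
  intro ℓ
  induction ℓ using Nat.strong_induction_on with
  | _ ℓ ih =>
    intro hℓn
    rw [← sub_pos]
    set k := n - 1 - ℓ
    have hsum := h.sum_sub_mul (k := k) (by omega) (by omega)
    rw [show n - k = ℓ + 1 by omega, sum_range_succ, show n - ℓ - 1 = k by omega] at hsum
    have hqkk := hq k k (by omega) le_rfl (by omega)
    rcases Nat.eq_zero_or_pos ℓ with rfl | hℓ
    · rw [sum_range_zero, zero_add] at hsum
      exact pos_of_mul_pos_left (hsum ▸ mul_pos h0 (hq n k (by omega) (by omega) le_rfl)) hqkk.le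
    have hsum' := h.sum_sub_mul (k := k + 1) (by omega) (by omega)
    rw [show n - (k + 1) = ℓ by omega] at hsum'
    -- the two identities combine into a sum of 2×2 minors of `q`
    have key : (θ ℓ - θ (ℓ + 1)) * (q k k * q n (k + 1)) = ∑ i ∈ range ℓ, (θ i - θ (i + 1)) *
        (q n k * q (n - i - 1) (k + 1) - q n (k + 1) * q (n - i - 1) k) := by
      have hsplit : ∑ i ∈ range ℓ, (θ i - θ (i + 1)) *
          (q n k * q (n - i - 1) (k + 1) - q n (k + 1) * q (n - i - 1) k) =
          q n k * ∑ i ∈ range ℓ, (θ i - θ (i + 1)) * q (n - i - 1) (k + 1) -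
            q n (k + 1) * ∑ i ∈ range ℓ, (θ i - θ (i + 1)) * q (n - i - 1) k := by
        rw [mul_sum, mul_sum, ← sum_sub_distrib]
        exact sum_congr rfl fun _ _ => by ring
      rw [hsplit]
      linear_combination q n (k + 1) * hsum - q n k * hsum'
    have hminors : 0 < ∑ i ∈ range ℓ, (θ i - θ (i + 1)) *
        (q n k * q (n - i - 1) (k + 1) - q n (k + 1) * q (n - i - 1) k) := by
      refine sum_pos (fun i hi => ?_) (nonempty_range_iff.mpr hℓ.ne')
      have hi := mem_range.mp hi
      refine mul_pos (sub_pos.mpr (ih i hi (by omega))) ?_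
      linarith [hTP (n - i - 1) k (by omega) (by omega) (by omega)]
    exact pos_of_mul_pos_left (key ▸ hminors)
      (mul_pos hqkk (hq n (k + 1) (by omega) (by omega) le_rfl)).le

end IsDOCKernel

lemma thetaAux_aK_pos_and_succ_lt {α : ℝ} (hα0 : 0 < α) (hα1 : α < 1) {t : ℕ → ℝ} {n : ℕ}
    (hn : 0 < n) (ht : StrictMonoOn t (Set.Iic n)) :
    (∀ m < n, 0 < thetaAux (aK α t) n m m) ∧
      ∀ ℓ, ℓ + 1 < n → thetaAux (aK α t) n (ℓ + 1) (ℓ + 1) < thetaAux (aK α t) n ℓ ℓ := by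
  have hlt : ∀ i j, i < j → j ≤ n → t i < t j := fun i j hij hj =>
    ht (Set.mem_Iic.mpr (by omega)) (Set.mem_Iic.mpr hj) hij
  have hle : ∀ i j, i ≤ j → j ≤ n → t i ≤ t j := fun i j hij hj =>
    hij.eq_or_lt.elim (fun h => h ▸ le_rfl) (fun h => (hlt i j h hj).le)
  have hq : ∀ j k, 1 ≤ k → k ≤ j → j ≤ n → 0 < qK α t j k := fun j k hk hkj hj =>
    qK_pos hα0 (hlt _ _ (by omega) (by omega)) (hle _ _ hkj hj)
  have hanti : ∀ j k, 1 ≤ k → k < j → j ≤ n → qK α t j k < qK α t (j - 1) k :=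
    fun j k hk hkj hj => qK_lt_qK hα0 hα1 (hlt _ _ (by omega) (by omega))
      (hle _ _ (by omega) (by omega)) (hlt _ _ (by omega) hj)
  have hTP : ∀ j k, 1 ≤ k → k < j → j < n →
      qK α t j k * qK α t n (k + 1) < qK α t n k * qK α t j (k + 1) :=
    fun j k hk hkj hj => qK_mul_lt_mul hα0 hα1 (hlt _ _ (by omega) (by omega))
      (hlt _ _ (by omega) (by omega)) (hle _ _ hkj hj.le) (hlt _ _ hj le_rfl)
  have hdoc : IsDOCKernel (qK α t) n fun m => thetaAux (aK α t) n m m := fun m hm hmn =>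
    thetaAux_aK_mul_qK hm hmn.le (hq _ _ (by omega) le_rfl (by omega)).ne'
  have h0 : 0 < thetaAux (aK α t) n 0 0 := by
    rw [thetaAux_aK_zero]
    exact one_div_pos.mpr (hq n n (by omega) le_rfl le_rfl)
  exact ⟨hdoc.pos hq hanti h0, hdoc.succ_lt hq hTP h0⟩

theorem stmt8_general (α : ℝ) (hα0 : 0 < α) (hα1 : α < 1)
    (N : ℕ) (t : ℕ → ℝ) (ht : ∀ k, k < N → t k < t (k + 1)) :
    ∀ n, 2 ≤ n → n ≤ N →
      (∀ k, 2 ≤ k → k ≤ n → thetaK α t n (k - 1) < thetaK α t n k) ∧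
      0 < thetaK α t n 1 := by
  intro n hn2 hnN
  have hmono : StrictMonoOn t (Set.Iic n) :=
    (strictMonoOn_Iic_of_lt_succ (n := N) fun k hk => by simpa using ht k hk).mono
      (Set.Iic_subset_Iic.mpr hnN)
  obtain ⟨hpos, hsucc⟩ := thetaAux_aK_pos_and_succ_lt hα0 hα1 (by omega) hmono
  refine ⟨fun k hk2 hkn => ?_, hpos (n - 1) (by omega)⟩
  unfold thetaK
  rw [show n - (k - 1) = n - k + 1 by omega]
  exact hsucc (n - k) (by omega)

theorem stmt8 (α : ℝ) (hα0 : 0 < α) (hα1 : α < 1)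
    (N : ℕ) (t : ℕ → ℝ) (ht0 : t 0 = 0) (ht : ∀ k, k < N → t k < t (k + 1)) :
    ∀ n, 2 ≤ n → n ≤ N →
      (∀ k, 2 ≤ k → k ≤ n → thetaK α t n (k - 1) < thetaK α t n k) ∧
      0 < thetaK α t n 1 :=
  stmt8_general α hα0 hα1 N t ht
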